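/- For every integer a ≥ 3, S(a) = T(a) ∪ {l_a, 2·l_a + 1} as subsets of ℕ, and moreover l_a ∉ T(a) and 2·l_a + 1 ∉ T(a). -/

import Mathlib

/-- The Lucas sequence: l 0 = 2, l 1 = 1, l (n+2) = l (n+1) + l n. -/
def lucas : ℕ → ℕ
  | 0 => 2
  | 1 => 1
  | n + 2 => lucas (n + 1) + lucas n

/-- The modified (monotone) Lucas sequence: l̃ 0 = 1, l̃ 1 = 2, l̃ n = l n for n ≥ 2. -/
def ltil : ℕ → ℕ
  | 0 => 1
  | 1 => 2
  | n + 2 => lucas (n + 2)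

/-- β x : minimal number of summands in a representation of x as a sum of
modified Lucas numbers (with repetitions allowed). -/
noncomputable def beta (x : ℕ) : ℕ :=
  sInf {s : ℕ | ∃ k : ℕ, ∃ b : ℕ → ℕ,
    x = ∑ i ∈ Finset.range (k + 1), b i * ltil i ∧ s = ∑ i ∈ Finset.range (k + 1), b i}

/-- γ x : the greatest k with l̃ k ≤ x (for x ≥ 1). -/
noncomputable def gamma (x : ℕ) : ℕ := sSup {k : ℕ | ltil k ≤ x}

/-- S a : the additive submonoid of ℕ generated by {l_a} ∪ {l_a + l_n : n ∈ ℕ}. -/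
def Sset (a : ℕ) : AddSubmonoid ℕ :=
  AddSubmonoid.closure ({lucas a} ∪ {x : ℕ | ∃ n : ℕ, x = lucas a + lucas n})

/-- T a : the additive submonoid of ℕ generated by {l_a + l_n : n ∈ ℕ}. -/
def Tset (a : ℕ) : AddSubmonoid ℕ :=
  AddSubmonoid.closure {x : ℕ | ∃ n : ℕ, x = lucas a + lucas n}

/-!
Every generator `l_a + l_n` of `T(a)` exceeds `l_a`, and for `a ≥ 3` no Lucas number equals
`l_a + 1` (it lies strictly between `l_a` and `l_{a+1} = l_a + l_{a-1}`); since a sum of two nonzero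
elements of `T(a)` is at least `2 l_a + 2`, the numbers `l_a` and `2 l_a + 1` are missing from `T(a)`.
Conversely, adding `l_a` to `t ∈ T(a)` stays in `T(a)` unless `t = 0` or `t = l_a + 1`, thanks to
`l_a + (l_a + l_{n+2}) = (l_a + l_{n+1}) + (l_a + l_n)` and `l_a + (l_a + l_0) = 2 (l_a + l_1)`.
Hence `T(a) ∪ {l_a, 2 l_a + 1}` is closed under adding the generators of `S(a)`.
-/

theorem lucas_add_two (n : ℕ) : lucas (n + 2) = lucas (n + 1) + lucas n := rfl

theorem lucas_pos : ∀ n, 0 < lucas n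
  | 0 | 1 => by decide
  | n + 2 => Nat.add_pos_left (lucas_pos (n + 1)) _

theorem monotone_lucas_succ : Monotone fun n => lucas (n + 1) :=
  monotone_nat_of_le_succ fun _ => Nat.le_add_right _ _

theorem lucas_ne_lucas_add_one {a : ℕ} (ha : 3 ≤ a) (n : ℕ) : lucas n ≠ lucas a + 1 := by
  obtain ⟨b, rfl⟩ := Nat.exists_eq_add_of_le' ha
  have h3 : 3 ≤ lucas (b + 2) := monotone_lucas_succ (Nat.le_add_left 1 b)
  have hL : lucas (b + 3) = lucas (b + 2) + lucas (b + 1) := rfl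
  rcases n with _ | m
  · have : lucas 0 = 2 := rfl
    have := lucas_pos (b + 1)
    omega
  rcases le_or_gt m (b + 2) with h | h
  · have : lucas (m + 1) ≤ lucas (b + 3) := monotone_lucas_succ h
    omega
  · have : lucas (b + 4) ≤ lucas (m + 1) := monotone_lucas_succ (h : b + 3 ≤ m)
    have : lucas (b + 4) = lucas (b + 3) + lucas (b + 2) := rfl
    omega

theorem lucas_add_lucas_mem_Tset (a n : ℕ) : lucas a + lucas n ∈ Tset a :=
  AddSubmonoid.subset_closure ⟨n, rfl⟩

theorem lucas_add_one_mem_Tset (a : ℕ) : lucas a + 1 ∈ Tset a :=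
  lucas_add_lucas_mem_Tset a 1

theorem eq_zero_or_lucas_lt_and_ne_of_mem_Tset {a t : ℕ} (ha : 3 ≤ a) (ht : t ∈ Tset a) :
    t = 0 ∨ (lucas a < t ∧ t ≠ 2 * lucas a + 1) := by
  induction ht using AddSubmonoid.closure_induction with
  | mem x hx =>
    obtain ⟨n, rfl⟩ := hx
    have := lucas_pos n
    have := lucas_ne_lucas_add_one ha n
    omega
  | zero => exact Or.inl rfl
  | add x y _ _ hx hy => omega

theorem lucas_notMem_Tset {a : ℕ} (ha : 3 ≤ a) : lucas a ∉ Tset a := fun h => by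
  have := lucas_pos a
  have := eq_zero_or_lucas_lt_and_ne_of_mem_Tset ha h
  omega

theorem two_mul_lucas_add_one_notMem_Tset {a : ℕ} (ha : 3 ≤ a) : 2 * lucas a + 1 ∉ Tset a :=
  fun h => by
    have := eq_zero_or_lucas_lt_and_ne_of_mem_Tset ha h
    omega

theorem eq_zero_or_eq_lucas_add_one_or_lucas_add_mem_Tset {a t : ℕ} (ht : t ∈ Tset a) :
    t = 0 ∨ t = lucas a + 1 ∨ lucas a + t ∈ Tset a := by
  have h0 : lucas 0 = 2 := rfl
  induction ht using AddSubmonoid.closure_induction with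
  | mem x hx =>
    obtain ⟨n, rfl⟩ := hx
    match n with
    | 0 =>
      rw [show lucas a + (lucas a + lucas 0) = (lucas a + 1) + (lucas a + 1) by omega]
      exact Or.inr (Or.inr (add_mem (lucas_add_one_mem_Tset a) (lucas_add_one_mem_Tset a)))
    | 1 => exact Or.inr (Or.inl rfl)
    | n + 2 =>
      rw [lucas_add_two, show ∀ x y z : ℕ, x + (x + (y + z)) = (x + y) + (x + z) by lia]
      exact Or.inr (Or.inr
        (add_mem (lucas_add_lucas_mem_Tset a (n + 1)) (lucas_add_lucas_mem_Tset a n)))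
  | zero => exact Or.inl rfl
  | add x y _ hy ihx ihy =>
    rcases ihx with rfl | rfl | hx
    · simpa using ihy
    · rcases ihy with rfl | rfl | hy'
      · exact Or.inr (Or.inl rfl)
      · rw [show lucas a + (lucas a + 1 + (lucas a + 1)) = (lucas a + lucas a) + (lucas a + lucas 0)
          by omega]
        exact Or.inr (Or.inr
          (add_mem (lucas_add_lucas_mem_Tset a a) (lucas_add_lucas_mem_Tset a 0)))
      · rw [add_left_comm]
        exact Or.inr (Or.inr (add_mem (lucas_add_one_mem_Tset a) hy'))
    · rw [← add_assoc]
      exact Or.inr (Or.inr (add_mem hx hy))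

theorem lucas_add_mem_Tset_union {a u : ℕ}
    (hu : u ∈ (Tset a : Set ℕ) ∪ {lucas a, 2 * lucas a + 1}) :
    lucas a + u ∈ (Tset a : Set ℕ) ∪ {lucas a, 2 * lucas a + 1} := by
  rcases hu with hu | rfl | rfl
  · rcases eq_zero_or_eq_lucas_add_one_or_lucas_add_mem_Tset hu with rfl | rfl | h
    · exact Or.inr (Or.inl rfl)
    · exact Or.inr (Or.inr (by omega : lucas a + (lucas a + 1) = 2 * lucas a + 1))
    · exact Or.inl h
  · exact Or.inl (lucas_add_lucas_mem_Tset a a)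
  · rw [show lucas a + (2 * lucas a + 1) = (lucas a + lucas a) + (lucas a + 1) by omega]
    exact Or.inl (add_mem (lucas_add_lucas_mem_Tset a a) (lucas_add_one_mem_Tset a))

theorem add_mem_Tset_union {a t u : ℕ} (ht : t ∈ Tset a) (ht0 : t ≠ 0)
    (hu : u ∈ (Tset a : Set ℕ) ∪ {lucas a, 2 * lucas a + 1}) :
    t + u ∈ (Tset a : Set ℕ) ∪ {lucas a, 2 * lucas a + 1} := by
  rcases hu with hu | rfl | rfl
  · exact Or.inl (add_mem ht hu)
  · rw [add_comm t]
    exact lucas_add_mem_Tset_union (Or.inl ht)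
  · have h := add_mem ht (lucas_add_one_mem_Tset a)
    rcases eq_zero_or_eq_lucas_add_one_or_lucas_add_mem_Tset h with h | h | h
    · omega
    · omega
    · rw [show t + (2 * lucas a + 1) = lucas a + (t + (lucas a + 1)) by omega]
      exact Or.inl h

theorem Sset_subset_Tset_union (a : ℕ) :
    (Sset a : Set ℕ) ⊆ (Tset a : Set ℕ) ∪ {lucas a, 2 * lucas a + 1} := by
  intro s hs
  induction hs using AddSubmonoid.closure_induction_left with
  | zero => exact Or.inl (zero_mem _)
  | add_left x hx y _ hy =>
    rcases hx with rfl | ⟨n, rfl⟩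
    · exact lucas_add_mem_Tset_union hy
    · have := lucas_pos n
      exact add_mem_Tset_union (lucas_add_lucas_mem_Tset a n) (by omega) hy

theorem Tset_le_Sset (a : ℕ) : Tset a ≤ Sset a :=
  AddSubmonoid.closure_mono Set.subset_union_right

theorem lucas_mem_Sset (a : ℕ) : lucas a ∈ Sset a :=
  AddSubmonoid.subset_closure (Or.inl rfl)

theorem two_mul_lucas_add_one_mem_Sset (a : ℕ) : 2 * lucas a + 1 ∈ Sset a := by
  rw [two_mul, add_assoc]
  exact add_mem (lucas_mem_Sset a) (Tset_le_Sset a (lucas_add_one_mem_Tset a))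

theorem S_eq_T_union (a : ℕ) (ha : 3 ≤ a) :
    (Sset a : Set ℕ) = (Tset a : Set ℕ) ∪ {lucas a, 2 * lucas a + 1} ∧
    lucas a ∉ Tset a ∧ 2 * lucas a + 1 ∉ Tset a := by
  refine ⟨subset_antisymm (Sset_subset_Tset_union a) ?_, lucas_notMem_Tset ha,
    two_mul_lucas_add_one_notMem_Tset ha⟩
  exact Set.union_subset (Tset_le_Sset a)
    (Set.pair_subset (lucas_mem_Sset a) (two_mul_lucas_add_one_mem_Sset a))
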